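/- arXiv:2406.08364 — 3 statements merged into one kernel-verified Lean document; each statement's English description precedes it below -/
import Mathlib

section
/- Let γ > 1/4 and ρ as in the context, and fix k ∈ ℤ and δ > 0. Then lim_{ε→0} ∫_{{τ ∈ ℝ : |τ| ≥ δ}} f_{ε,k}(τ) dτ = 0. In other words, μ^ε_k gives vanishing mass to every set bounded away from the origin. -/
open MeasureTheory Filter

/-- The (real-valued) Fourier transform of an even real function:
`ρ̂(q) = ∫ ρ(x) e^{-2πiqx} dx = ∫ ρ(x) cos(2πqx) dx`. -/
noncomputable def fhat (ρ : ℝ → ℝ) (q : ℝ) : ℝ :=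
  ∫ x : ℝ, ρ x * Real.cos (2 * Real.pi * q * x)

/-- The density `f_{ε,k}` of the measure `μ^ε_k` from the variance computation. -/
noncomputable def fden (γ : ℝ) (ρ : ℝ → ℝ) (ε : ℝ) (k : ℤ) (τ : ℝ) : ℝ :=
  (1 / (32 * Real.pi ^ 4)) * ε⁻¹ *
    ∑' n : ℤ, if n ≠ 0 ∧ n ≠ -k then
      |ε * (n : ℝ)| ^ (2 * γ) * |ε * ((n : ℝ) + (k : ℝ))| ^ (2 * γ) *
        (fhat ρ (ε * (n : ℝ))) ^ 2 * (fhat ρ (ε * ((n : ℝ) + (k : ℝ)))) ^ 2 *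
        Real.exp (-(4 * Real.pi ^ 2) * |τ| * ((n : ℝ) ^ 2 + ((n : ℝ) + (k : ℝ)) ^ 2))
    else 0

lemma aux_integrable_exp_neg_mul_abs {b : ℝ} (hb : 0 < b) :
    Integrable fun x : ℝ => Real.exp (-b * |x|) := by
  have h0 : IntegrableOn (fun x : ℝ => Real.exp (-b * |x|)) (Set.Ioi 0) := by
    refine (exp_neg_integrableOn_Ioi 0 hb).congr_fun ?_ measurableSet_Ioi
    intro x hx
    simp [abs_of_pos (Set.mem_Ioi.mp hx)]
  rw [← integrableOn_univ, ← Set.Iio_union_Ici (a := (0 : ℝ)), integrableOn_union,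
    integrableOn_Ici_iff_integrableOn_Ioi]
  refine ⟨?_, h0⟩
  rw [← (Measure.measurePreserving_neg (volume : Measure ℝ)).integrableOn_comp_preimage
      (Homeomorph.neg ℝ).measurableEmbedding]
  simpa [Function.comp_def, abs_neg] using h0

lemma aux_summable_exp_neg_mul_abs_int {b : ℝ} (hb : 0 < b) :
    Summable fun n : ℤ => Real.exp (-b * |(n : ℝ)|) := by
  have hnat : Summable fun n : ℕ => Real.exp (-b * (n : ℝ)) := by
    have h1 : ∀ n : ℕ, Real.exp (-b * (n : ℝ)) = Real.exp (-b) ^ n := by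
      intro n
      rw [← Real.exp_nat_mul]
      ring_nf
    simp_rw [h1]
    exact summable_geometric_of_lt_one (Real.exp_nonneg _)
      (Real.exp_lt_one_iff.mpr (by linarith))
  apply Summable.of_nat_of_neg
  · refine hnat.congr fun n => ?_
    simp [abs_of_nonneg (Nat.cast_nonneg (α := ℝ) n)]
  · refine hnat.congr fun n => ?_
    push_cast
    simp [abs_of_nonneg (Nat.cast_nonneg (α := ℝ) n)]

lemma aux_rpow_mul_exp_le {s c x : ℝ} (hs : 0 < s) (hc : 0 < c) (hx : 1 ≤ x) :
    x ^ s * Real.exp (-c * x) ≤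
      Real.exp (-(s * (1 + Real.log (c / (2 * s))))) * Real.exp (-(c / 2) * x) := by
  have hx0 : 0 < x := lt_of_lt_of_le one_pos hx
  set b : ℝ := c / (2 * s) with hbdef
  have hb : 0 < b := by positivity
  have hlog : Real.log x ≤ b * x - 1 - Real.log b := by
    have h1 : Real.log (b * x) ≤ b * x - 1 := Real.log_le_sub_one_of_pos (by positivity)
    rw [Real.log_mul (ne_of_gt hb) (ne_of_gt hx0)] at h1
    linarith
  rw [Real.rpow_def_of_pos hx0, ← Real.exp_add, ← Real.exp_add]
  apply Real.exp_le_exp.mpr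
  have hsb : s * b = c / 2 := by
    rw [hbdef]
    field_simp
  have h2 : s * Real.log x ≤ s * (b * x - 1 - Real.log b) :=
    mul_le_mul_of_nonneg_left hlog hs.le
  nlinarith

set_option maxHeartbeats 1600000 in
theorem mass_away_from_origin_vanishes
    (γ : ℝ) (hγ : 1 / 4 < γ)
    (ρ : ℝ → ℝ) (hρs : ContDiff ℝ (⊤ : ℕ∞) ρ) (hρe : ∀ x, ρ (-x) = ρ x)
    (hρn : ∀ x, 0 ≤ ρ x) (hρsupp : Function.support ρ ⊆ Metric.closedBall 0 (1 / 4))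
    (hρint : ∫ x : ℝ, ρ x = 1) (k : ℤ) (δ : ℝ) (hδ : 0 < δ) :
    Tendsto (fun ε : ℝ => ∫ τ in {τ : ℝ | δ ≤ |τ|}, fden γ ρ ε k τ)
      (nhdsWithin 0 (Set.Ioi 0)) (nhds 0) := by
  have hπ : 0 < Real.pi := Real.pi_pos
  have hγ0 : 0 < γ := lt_trans (by norm_num) hγ
  -- integrability of ρ
  have hρcs : HasCompactSupport ρ := by
    apply HasCompactSupport.intro (isCompact_closedBall (0 : ℝ) (1 / 4))
    intro x hx
    by_contra h
    exact hx (hρsupp (Function.mem_support.mpr h))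
  have hρI : Integrable ρ := hρs.continuous.integrable_of_hasCompactSupport hρcs
  -- bound on fhat
  have hfhat : ∀ q : ℝ, (fhat ρ q) ^ 2 ≤ 1 := by
    intro q
    have h1 : |fhat ρ q| ≤ 1 := by
      have h2 : ‖∫ x : ℝ, ρ x * Real.cos (2 * Real.pi * q * x)‖ ≤ ∫ x : ℝ, ρ x := by
        refine norm_integral_le_of_norm_le hρI (Filter.Eventually.of_forall fun x => ?_)
        rw [Real.norm_eq_abs, abs_mul, abs_of_nonneg (hρn x)]
        calc ρ x * |Real.cos (2 * Real.pi * q * x)| ≤ ρ x * 1 :=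
              mul_le_mul_of_nonneg_left (Real.abs_cos_le_one _) (hρn x)
          _ = ρ x := mul_one _
      rw [hρint] at h2
      simpa [fhat, Real.norm_eq_abs] using h2
    calc (fhat ρ q) ^ 2 = |fhat ρ q| ^ 2 := (sq_abs _).symm
      _ ≤ 1 := by nlinarith [abs_nonneg (fhat ρ q)]
  -- constants
  set c' : ℝ := 4 * Real.pi ^ 2 with hc'def
  have hc' : 0 < c' := by positivity
  set c : ℝ := c' * δ with hcdef
  have hc : 0 < c := mul_pos hc' hδ
  set M : ℝ := Real.exp (-(2 * γ * (1 + Real.log (c / (2 * (2 * γ)))))) with hMdef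
  have hM : 0 < M := Real.exp_pos _
  -- the summable majorant
  set a : ℤ → ℝ := fun n => if n ≠ 0 ∧ n ≠ -k then
      |(n : ℝ)| ^ (2 * γ) * |(n : ℝ) + (k : ℝ)| ^ (2 * γ) *
        Real.exp (-c * ((n : ℝ) ^ 2 + ((n : ℝ) + (k : ℝ)) ^ 2)) else 0 with hadef
  have ha_nonneg : ∀ n, 0 ≤ a n := by
    intro n
    rw [hadef]
    dsimp only
    split
    · positivity
    · exact le_refl 0
  -- basic facts about Q_n for n ≠ 0
  have hQfacts : ∀ n : ℤ, n ≠ 0 →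
      1 ≤ (n : ℝ) ^ 2 + ((n : ℝ) + (k : ℝ)) ^ 2 ∧
      |(n : ℝ)| ≤ (n : ℝ) ^ 2 + ((n : ℝ) + (k : ℝ)) ^ 2 := by
    intro n hn
    have h1 : (1 : ℝ) ≤ |(n : ℝ)| := by
      have := Int.one_le_abs hn
      calc (1 : ℝ) = ((1 : ℤ) : ℝ) := by norm_num
        _ ≤ ((|n| : ℤ) : ℝ) := by exact_mod_cast this
        _ = |(n : ℝ)| := by push_cast; ring
    have h2 : |(n : ℝ)| ^ 2 = (n : ℝ) ^ 2 := sq_abs _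
    constructor
    · nlinarith [sq_nonneg ((n : ℝ) + (k : ℝ))]
    · nlinarith [sq_nonneg ((n : ℝ) + (k : ℝ))]
  -- a is summable
  have ha_le : ∀ n : ℤ, a n ≤ M * Real.exp (-(c / 2) * |(n : ℝ)|) := by
    intro n
    rw [hadef]
    dsimp only
    split
    case isTrue h =>
      obtain ⟨hn0, _⟩ := h
      set Q : ℝ := (n : ℝ) ^ 2 + ((n : ℝ) + (k : ℝ)) ^ 2 with hQdef
      obtain ⟨hQ1, hQabs⟩ := hQfacts n hn0
      have hQ0 : 0 < Q := lt_of_lt_of_le one_pos hQ1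
      -- step 1 : |n|^{2γ} |n+k|^{2γ} ≤ Q^{2γ}
      have hstep1 : |(n : ℝ)| ^ (2 * γ) * |(n : ℝ) + (k : ℝ)| ^ (2 * γ) ≤ Q ^ (2 * γ) := by
        have e1 : |(n : ℝ)| ^ (2 * γ) = ((n : ℝ) ^ 2) ^ γ := by
          rw [← sq_abs, ← Real.rpow_natCast (|(n : ℝ)|) 2, ← Real.rpow_mul (abs_nonneg _)]
          norm_num
        have e2 : |(n : ℝ) + (k : ℝ)| ^ (2 * γ) = (((n : ℝ) + (k : ℝ)) ^ 2) ^ γ := by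
          rw [← sq_abs, ← Real.rpow_natCast (|(n : ℝ) + (k : ℝ)|) 2,
            ← Real.rpow_mul (abs_nonneg _)]
          norm_num
        rw [e1, e2]
        calc ((n : ℝ) ^ 2) ^ γ * (((n : ℝ) + (k : ℝ)) ^ 2) ^ γ
            ≤ Q ^ γ * Q ^ γ := by
              apply mul_le_mul
              · exact Real.rpow_le_rpow (sq_nonneg _) (by nlinarith [sq_nonneg ((n:ℝ)+(k:ℝ))]) hγ0.le
              · exact Real.rpow_le_rpow (sq_nonneg _) (by nlinarith [sq_nonneg ((n:ℝ))]) hγ0.le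
              · positivity
              · positivity
          _ = Q ^ (γ + γ) := (Real.rpow_add hQ0 γ γ).symm
          _ = Q ^ (2 * γ) := by ring_nf
      -- step 2 : Q^{2γ} e^{-cQ} ≤ M e^{-(c/2)Q}
      have hstep2 : Q ^ (2 * γ) * Real.exp (-c * Q) ≤ M * Real.exp (-(c / 2) * Q) := by
        have := aux_rpow_mul_exp_le (s := 2 * γ) (c := c) (x := Q) (by linarith) hc hQ1
        simpa [hMdef] using this
      have hstep3 : Real.exp (-(c / 2) * Q) ≤ Real.exp (-(c / 2) * |(n : ℝ)|) := by
        apply Real.exp_le_exp.mpr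
        nlinarith
      calc |(n : ℝ)| ^ (2 * γ) * |(n : ℝ) + (k : ℝ)| ^ (2 * γ) * Real.exp (-c * Q)
          ≤ Q ^ (2 * γ) * Real.exp (-c * Q) :=
            mul_le_mul_of_nonneg_right hstep1 (Real.exp_pos _).le
        _ ≤ M * Real.exp (-(c / 2) * Q) := hstep2
        _ ≤ M * Real.exp (-(c / 2) * |(n : ℝ)|) :=
            mul_le_mul_of_nonneg_left hstep3 hM.le
    case isFalse h => positivity
  have ha_sum : Summable a :=
    Summable.of_nonneg_of_le ha_nonneg ha_le
      ((aux_summable_exp_neg_mul_abs_int (by linarith : (0:ℝ) < c / 2)).mul_left M)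
  set S : ℝ := ∑' n, a n with hSdef
  have hS0 : 0 ≤ S := tsum_nonneg ha_nonneg
  -- the integrable majorant in τ
  set E : ℝ → ℝ := fun τ => Real.exp (-c' * (|τ| - δ)) with hEdef
  have hEeq : E = fun τ => Real.exp (c' * δ) * Real.exp (-c' * |τ|) := by
    funext τ
    rw [hEdef, ← Real.exp_add]
    ring_nf
  have hEint : Integrable E := by
    rw [hEeq]
    exact (aux_integrable_exp_neg_mul_abs hc').const_mul _
  have hE0 : ∀ τ, 0 ≤ E τ := fun τ => (Real.exp_pos _).le
  set K : ℝ := 1 / (32 * Real.pi ^ 4) * S with hKdef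
  have hK0 : 0 ≤ K := by positivity
  set I : ℝ := ∫ τ : ℝ, E τ with hIdef
  have hI0 : 0 ≤ I := integral_nonneg hE0
  have hmeas : MeasurableSet {τ : ℝ | δ ≤ |τ|} :=
    (isClosed_le continuous_const continuous_abs).measurableSet
  -- pointwise bound on fden
  have key : ∀ ε : ℝ, 0 < ε → ∀ τ : ℝ, δ ≤ |τ| →
      fden γ ρ ε k τ ≤ K * ε ^ (4 * γ - 1) * E τ := by
    intro ε hε τ hτ
    have hterm : ∀ n : ℤ,
        (if n ≠ 0 ∧ n ≠ -k then
          |ε * (n : ℝ)| ^ (2 * γ) * |ε * ((n : ℝ) + (k : ℝ))| ^ (2 * γ) *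
            (fhat ρ (ε * (n : ℝ))) ^ 2 * (fhat ρ (ε * ((n : ℝ) + (k : ℝ)))) ^ 2 *
            Real.exp (-(4 * Real.pi ^ 2) * |τ| * ((n : ℝ) ^ 2 + ((n : ℝ) + (k : ℝ)) ^ 2))
        else 0) ≤ ε ^ (4 * γ) * E τ * a n := by
      intro n
      rw [hadef]
      dsimp only
      split
      case isFalse h =>
        have : (0:ℝ) ≤ ε ^ (4 * γ) * E τ * 0 := by simp
        simpa using this
      case isTrue h =>
        obtain ⟨hn0, _⟩ := h
        set Q : ℝ := (n : ℝ) ^ 2 + ((n : ℝ) + (k : ℝ)) ^ 2 with hQdef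
        obtain ⟨hQ1, _⟩ := hQfacts n hn0
        have hexp : Real.exp (-(4 * Real.pi ^ 2) * |τ| * Q) ≤ E τ * Real.exp (-c * Q) := by
          rw [hEdef]
          dsimp only
          rw [← Real.exp_add]
          apply Real.exp_le_exp.mpr
          have h1 : 0 ≤ (|τ| - δ) * (Q - 1) :=
            mul_nonneg (by linarith) (by linarith)
          rw [hcdef, hc'def]
          nlinarith [sq_nonneg Real.pi, mul_nonneg (by positivity : (0:ℝ) ≤ 4 * Real.pi ^ 2) h1]
        have habs1 : |ε * (n : ℝ)| ^ (2 * γ) = ε ^ (2 * γ) * |(n : ℝ)| ^ (2 * γ) := by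
          rw [abs_mul, abs_of_pos hε, Real.mul_rpow hε.le (abs_nonneg _)]
        have habs2 : |ε * ((n : ℝ) + (k : ℝ))| ^ (2 * γ)
            = ε ^ (2 * γ) * |(n : ℝ) + (k : ℝ)| ^ (2 * γ) := by
          rw [abs_mul, abs_of_pos hε, Real.mul_rpow hε.le (abs_nonneg _)]
        have hεpow : ε ^ (2 * γ) * ε ^ (2 * γ) = ε ^ (4 * γ) := by
          rw [← Real.rpow_add hε]
          ring_nf
        calc |ε * (n : ℝ)| ^ (2 * γ) * |ε * ((n : ℝ) + (k : ℝ))| ^ (2 * γ) *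
              (fhat ρ (ε * (n : ℝ))) ^ 2 * (fhat ρ (ε * ((n : ℝ) + (k : ℝ)))) ^ 2 *
              Real.exp (-(4 * Real.pi ^ 2) * |τ| * Q)
            ≤ |ε * (n : ℝ)| ^ (2 * γ) * |ε * ((n : ℝ) + (k : ℝ))| ^ (2 * γ) * 1 * 1 *
              (E τ * Real.exp (-c * Q)) := by
              gcongr <;> first | exact hfhat _ | exact hexp
          _ = (ε ^ (2 * γ) * ε ^ (2 * γ)) *
              (E τ * (|(n : ℝ)| ^ (2 * γ) * |(n : ℝ) + (k : ℝ)| ^ (2 * γ) *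
                Real.exp (-c * Q))) := by
              rw [habs1, habs2]; ring
          _ = ε ^ (4 * γ) * E τ *
              (|(n : ℝ)| ^ (2 * γ) * |(n : ℝ) + (k : ℝ)| ^ (2 * γ) *
                Real.exp (-c * Q)) := by rw [hεpow]; ring
    -- sum the bounds
    have hterm_nonneg : ∀ n : ℤ,
        (0:ℝ) ≤ (if n ≠ 0 ∧ n ≠ -k then
          |ε * (n : ℝ)| ^ (2 * γ) * |ε * ((n : ℝ) + (k : ℝ))| ^ (2 * γ) *
            (fhat ρ (ε * (n : ℝ))) ^ 2 * (fhat ρ (ε * ((n : ℝ) + (k : ℝ)))) ^ 2 *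
            Real.exp (-(4 * Real.pi ^ 2) * |τ| * ((n : ℝ) ^ 2 + ((n : ℝ) + (k : ℝ)) ^ 2))
        else 0) := by
      intro n
      split
      · positivity
      · exact le_refl 0
    have hg_sum : Summable fun n : ℤ => ε ^ (4 * γ) * E τ * a n :=
      ha_sum.mul_left _
    have ht_sum : Summable fun n : ℤ =>
        (if n ≠ 0 ∧ n ≠ -k then
          |ε * (n : ℝ)| ^ (2 * γ) * |ε * ((n : ℝ) + (k : ℝ))| ^ (2 * γ) *
            (fhat ρ (ε * (n : ℝ))) ^ 2 * (fhat ρ (ε * ((n : ℝ) + (k : ℝ)))) ^ 2 *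
            Real.exp (-(4 * Real.pi ^ 2) * |τ| * ((n : ℝ) ^ 2 + ((n : ℝ) + (k : ℝ)) ^ 2))
        else 0) :=
      Summable.of_nonneg_of_le hterm_nonneg hterm hg_sum
    have htsum : (∑' n : ℤ,
        (if n ≠ 0 ∧ n ≠ -k then
          |ε * (n : ℝ)| ^ (2 * γ) * |ε * ((n : ℝ) + (k : ℝ))| ^ (2 * γ) *
            (fhat ρ (ε * (n : ℝ))) ^ 2 * (fhat ρ (ε * ((n : ℝ) + (k : ℝ)))) ^ 2 *
            Real.exp (-(4 * Real.pi ^ 2) * |τ| * ((n : ℝ) ^ 2 + ((n : ℝ) + (k : ℝ)) ^ 2))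
        else 0)) ≤ ε ^ (4 * γ) * E τ * S := by
      refine (Summable.tsum_le_tsum hterm ht_sum hg_sum).trans (le_of_eq ?_)
      rw [hSdef, tsum_mul_left]
    have hεpow' : ε⁻¹ * ε ^ (4 * γ) = ε ^ (4 * γ - 1) := by
      rw [Real.rpow_sub hε, Real.rpow_one]
      field_simp
    calc fden γ ρ ε k τ
        ≤ 1 / (32 * Real.pi ^ 4) * ε⁻¹ * (ε ^ (4 * γ) * E τ * S) := by
          rw [fden]
          apply mul_le_mul_of_nonneg_left htsum (by positivity)
      _ = K * (ε⁻¹ * ε ^ (4 * γ)) * E τ := by rw [hKdef]; ring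
      _ = K * ε ^ (4 * γ - 1) * E τ := by rw [hεpow']
  -- nonnegativity of fden for ε > 0
  have hfden_nonneg : ∀ ε : ℝ, 0 < ε → ∀ τ : ℝ, 0 ≤ fden γ ρ ε k τ := by
    intro ε hε τ
    rw [fden]
    apply mul_nonneg (by positivity)
    apply tsum_nonneg
    intro n
    split
    · positivity
    · exact le_refl 0
  -- the integral bound
  have hIbound : ∀ ε : ℝ, 0 < ε →
      (∫ τ in {τ : ℝ | δ ≤ |τ|}, fden γ ρ ε k τ) ≤ K * I * ε ^ (4 * γ - 1) := by
    intro ε hε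
    have hgint : Integrable (fun τ : ℝ => K * ε ^ (4 * γ - 1) * E τ) :=
      hEint.const_mul _
    have h1 : (∫ τ in {τ : ℝ | δ ≤ |τ|}, fden γ ρ ε k τ)
        ≤ ∫ τ in {τ : ℝ | δ ≤ |τ|}, K * ε ^ (4 * γ - 1) * E τ := by
      apply integral_mono_of_nonneg
      · exact Filter.Eventually.of_forall fun τ => hfden_nonneg ε hε τ
      · exact hgint.integrableOn
      · exact (ae_restrict_iff' hmeas).mpr
          (Filter.Eventually.of_forall fun τ hτ => key ε hε τ hτ)
    have h2 : (∫ τ in {τ : ℝ | δ ≤ |τ|}, K * ε ^ (4 * γ - 1) * E τ)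
        = K * ε ^ (4 * γ - 1) * ∫ τ in {τ : ℝ | δ ≤ |τ|}, E τ := by
      rw [integral_const_mul]
    have h3 : (∫ τ in {τ : ℝ | δ ≤ |τ|}, E τ) ≤ I :=
      setIntegral_le_integral hEint (Filter.Eventually.of_forall hE0)
    calc (∫ τ in {τ : ℝ | δ ≤ |τ|}, fden γ ρ ε k τ)
        ≤ K * ε ^ (4 * γ - 1) * ∫ τ in {τ : ℝ | δ ≤ |τ|}, E τ := by rw [← h2]; exact h1
      _ ≤ K * ε ^ (4 * γ - 1) * I := by
          apply mul_le_mul_of_nonneg_left h3 (by positivity)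
      _ = K * I * ε ^ (4 * γ - 1) := by ring
  -- conclude by squeezing
  have hp : 0 < 4 * γ - 1 := by linarith
  have hlim : Tendsto (fun ε : ℝ => K * I * ε ^ (4 * γ - 1))
      (nhdsWithin 0 (Set.Ioi 0)) (nhds 0) := by
    have h1 : Tendsto (fun ε : ℝ => ε ^ (4 * γ - 1)) (nhds (0:ℝ)) (nhds 0) := by
      have := (Real.continuousAt_rpow_const 0 (4 * γ - 1) (Or.inr hp.le)).tendsto
      rwa [Real.zero_rpow (ne_of_gt hp)] at this
    have h2 := Tendsto.const_mul (b := K * I)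
      (h1.mono_left (nhdsWithin_le_nhds (s := Set.Ioi (0:ℝ))))
    simpa using h2
  apply squeeze_zero'
  · filter_upwards [self_mem_nhdsWithin] with ε hε
    exact setIntegral_nonneg hmeas fun τ _ => hfden_nonneg ε hε τ
  · filter_upwards [self_mem_nhdsWithin] with ε hε
    exact hIbound ε hε
  · exact hlim
end

section
/- Let κ ∈ (0, 1/3). There exists a finite constant C (depending only on κ) such that for all integers j ≥ 0 and all reals 0 ≤ s < t one has ∫_s^t Σ_{k ∈ ℤ, 2^{j-1} ≤ |k| ≤ 2^{j+1}} exp(-(t - r)k²) dr ≤ C (t - s)^κ 2^{-j(1 - 3κ)}. -/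
open MeasureTheory

private lemma min_le_rpow_interp (x y κ : ℝ) (hx : 0 < x) (hy : 0 < y)
    (h0 : 0 ≤ κ) (h1 : κ ≤ 1) : min x y ≤ x ^ κ * y ^ (1 - κ) := by
  have hm : 0 < min x y := lt_min hx hy
  calc min x y = (min x y) ^ κ * (min x y) ^ (1 - κ) := by
        rw [← Real.rpow_add hm]; simp
    _ ≤ x ^ κ * y ^ (1 - κ) := by
        exact mul_le_mul (Real.rpow_le_rpow hm.le (min_le_left _ _) h0)
          (Real.rpow_le_rpow hm.le (min_le_right _ _) (by linarith))
          (Real.rpow_nonneg hm.le _) (Real.rpow_nonneg hx.le _)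

theorem dyadic_heat_bound_first
    (κ : ℝ) (hκ : κ ∈ Set.Ioo (0 : ℝ) (1 / 3)) :
    ∃ C : ℝ, ∀ j : ℕ, ∀ s t : ℝ, 0 ≤ s → s < t →
      (∫ r in Set.Ioc s t,
          ∑' k : ℤ, if (2 : ℝ) ^ ((j : ℝ) - 1) ≤ |(k : ℝ)| ∧ |(k : ℝ)| ≤ (2 : ℝ) ^ ((j : ℝ) + 1)
            then Real.exp (-(t - r) * (k : ℝ) ^ 2) else 0)
        ≤ C * (t - s) ^ κ * (2 : ℝ) ^ (-(j : ℝ) * (1 - 3 * κ)) := by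
  obtain ⟨hκ0, hκ3⟩ := hκ
  refine ⟨32, fun j s t hs hst => ?_⟩
  have hτ : (0 : ℝ) < t - s := sub_pos.2 hst
  set a : ℝ := (2 : ℝ) ^ (2 * (j : ℝ) - 2) with ha
  have ha0 : (0 : ℝ) < a := Real.rpow_pos_of_pos two_pos _
  set S : Finset ℤ := Finset.Icc (-(2 ^ (j + 1) : ℤ)) (2 ^ (j + 1)) with hS
  -- cast of the integer bound
  have hcast : ((2 ^ (j + 1) : ℤ) : ℝ) = (2 : ℝ) ^ ((j : ℝ) + 1) := by
    push_cast
    rw [← Real.rpow_natCast 2 (j + 1)]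
    push_cast
    ring_nf
  -- rewrite the tsum as a finite sum
  have hts : ∀ r : ℝ,
      (∑' k : ℤ, if (2 : ℝ) ^ ((j : ℝ) - 1) ≤ |(k : ℝ)| ∧ |(k : ℝ)| ≤ (2 : ℝ) ^ ((j : ℝ) + 1)
          then Real.exp (-(t - r) * (k : ℝ) ^ 2) else 0)
      = ∑ k ∈ S, (if (2 : ℝ) ^ ((j : ℝ) - 1) ≤ |(k : ℝ)| ∧ |(k : ℝ)| ≤ (2 : ℝ) ^ ((j : ℝ) + 1)
          then Real.exp (-(t - r) * (k : ℝ) ^ 2) else 0) := by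
    intro r
    apply tsum_eq_sum
    intro k hk
    rw [if_neg]
    rintro ⟨-, h2⟩
    apply hk
    rw [hS, Finset.mem_Icc]
    have : |(k : ℝ)| ≤ ((2 ^ (j + 1) : ℤ) : ℝ) := by rw [hcast]; exact h2
    rw [← Int.cast_abs, Int.cast_le] at this
    exact abs_le.1 this
  simp only [hts]
  set F : ℝ → ℝ := fun r =>
    ∑ k ∈ S, (if (2 : ℝ) ^ ((j : ℝ) - 1) ≤ |(k : ℝ)| ∧ |(k : ℝ)| ≤ (2 : ℝ) ^ ((j : ℝ) + 1)
        then Real.exp (-(t - r) * (k : ℝ) ^ 2) else 0) with hF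
  set G : ℝ → ℝ := fun r => (S.card : ℝ) * Real.exp (-(t - r) * a) with hG
  have hFcont : Continuous F := by
    apply continuous_finset_sum
    intro k _
    split_ifs
    · exact Real.continuous_exp.comp ((continuous_const.sub continuous_id).neg.mul continuous_const)
    · exact continuous_const
  have hGcont : Continuous G :=
    continuous_const.mul
      (Real.continuous_exp.comp ((continuous_const.sub continuous_id).neg.mul continuous_const))
  have hFG : ∀ r ∈ Set.Ioc s t, F r ≤ G r := by
    intro r hr
    have htr : 0 ≤ t - r := sub_nonneg.2 hr.2
    rw [hF, hG]
    calc (∑ k ∈ S, (if (2 : ℝ) ^ ((j : ℝ) - 1) ≤ |(k : ℝ)| ∧ |(k : ℝ)| ≤ (2 : ℝ) ^ ((j : ℝ) + 1)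
            then Real.exp (-(t - r) * (k : ℝ) ^ 2) else 0))
        ≤ ∑ _k ∈ S, Real.exp (-(t - r) * a) := by
          apply Finset.sum_le_sum
          intro k _
          split_ifs with h
          · apply Real.exp_le_exp.2
            have hk2 : a ≤ (k : ℝ) ^ 2 := by
              have h1 : (2 : ℝ) ^ ((j : ℝ) - 1) ≤ |(k : ℝ)| := h.1
              have h2 : ((2 : ℝ) ^ ((j : ℝ) - 1)) ^ 2 ≤ |(k : ℝ)| ^ 2 := by
                apply pow_le_pow_left₀ (Real.rpow_nonneg (by norm_num) _) h1
              rw [sq_abs] at h2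
              calc a = ((2 : ℝ) ^ ((j : ℝ) - 1)) ^ 2 := by
                      rw [← Real.rpow_natCast ((2:ℝ) ^ ((j:ℝ) - 1)) 2, ← Real.rpow_mul (by norm_num)]
                      rw [ha]
                      ring_nf
                _ ≤ (k : ℝ) ^ 2 := h2
            nlinarith
          · positivity
      _ = (S.card : ℝ) * Real.exp (-(t - r) * a) := by
          rw [Finset.sum_const, nsmul_eq_mul]
  have hFint : IntegrableOn F (Set.Ioc s t) := hFcont.integrableOn_Ioc
  have hGint : IntegrableOn G (Set.Ioc s t) := hGcont.integrableOn_Ioc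
  have step1 : ∫ r in Set.Ioc s t, F r ≤ ∫ r in Set.Ioc s t, G r :=
    setIntegral_mono_on hFint hGint measurableSet_Ioc hFG
  -- compute the integral of the exponential
  have hexp_int : ∫ r in Set.Ioc s t, Real.exp (-(t - r) * a)
      = (1 - Real.exp (-(t - s) * a)) / a := by
    rw [← intervalIntegral.integral_of_le hst.le]
    have hderiv : ∀ r ∈ Set.uIcc s t,
        HasDerivAt (fun r => Real.exp (-(t - r) * a) / a) (Real.exp (-(t - r) * a)) r := by
      intro r _
      have h1 : HasDerivAt (fun r : ℝ => -(t - r) * a) a r := by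
        simpa [neg_sub, one_mul] using ((hasDerivAt_id r).sub_const t).mul_const a
      have h2 := (h1.exp).div_const a
      have : Real.exp (-(t - r) * a) * a / a = Real.exp (-(t - r) * a) := by
        field_simp
      rwa [this] at h2
    rw [intervalIntegral.integral_eq_sub_of_hasDerivAt hderiv
      ((Real.continuous_exp.comp
        ((continuous_const.sub continuous_id).neg.mul continuous_const)).intervalIntegrable s t)]
    simp
    ring
  have hIpos : 0 ≤ ∫ r in Set.Ioc s t, Real.exp (-(t - r) * a) := by
    apply setIntegral_nonneg measurableSet_Ioc
    intro r _
    positivity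
  have hexp_le : ∫ r in Set.Ioc s t, Real.exp (-(t - r) * a)
      ≤ (t - s) ^ κ * (1 / a) ^ (1 - κ) := by
    rw [hexp_int]
    have hb1 : (1 - Real.exp (-(t - s) * a)) / a ≤ 1 / a := by
      have hnum : 1 - Real.exp (-(t - s) * a) ≤ 1 := by
        have := Real.exp_pos (-(t - s) * a); linarith
      gcongr
    have hb2 : (1 - Real.exp (-(t - s) * a)) / a ≤ t - s := by
      rw [div_le_iff₀ ha0]
      have := Real.add_one_le_exp (-(t - s) * a)
      nlinarith
    calc (1 - Real.exp (-(t - s) * a)) / a ≤ min (t - s) (1 / a) := le_min hb2 hb1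
      _ ≤ (t - s) ^ κ * (1 / a) ^ (1 - κ) :=
          min_le_rpow_interp _ _ _ hτ (by positivity) hκ0.le (by linarith)
  -- cardinality bound
  have hcard : (S.card : ℝ) ≤ (2 : ℝ) ^ ((j : ℝ) + 3) := by
    have h1 : (S.card : ℤ) ≤ 2 ^ (j + 3) := by
      rw [hS, Int.card_Icc]
      have h0 : (0 : ℤ) ≤ 2 ^ (j + 1) := by positivity
      rw [Int.toNat_of_nonneg (by linarith)]
      have h2 : (1 : ℤ) ≤ 2 ^ (j + 1) := by exact_mod_cast Nat.one_le_two_pow (n := j + 1)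
      have : (2 : ℤ) ^ (j + 3) = 4 * 2 ^ (j + 1) := by ring
      linarith
    have h2 : ((2 ^ (j + 3) : ℤ) : ℝ) = (2 : ℝ) ^ ((j : ℝ) + 3) := by
      push_cast
      rw [← Real.rpow_natCast 2 (j + 3)]
      push_cast
      ring_nf
    calc (S.card : ℝ) ≤ ((2 ^ (j + 3) : ℤ) : ℝ) := by exact_mod_cast h1
      _ = (2 : ℝ) ^ ((j : ℝ) + 3) := h2
  -- assemble
  have hGval : ∫ r in Set.Ioc s t, G r
      = (S.card : ℝ) * ∫ r in Set.Ioc s t, Real.exp (-(t - r) * a) := by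
    rw [hG]; exact integral_const_mul _ _
  have hstep2 : ∫ r in Set.Ioc s t, G r
      ≤ (2 : ℝ) ^ ((j : ℝ) + 3) * ((t - s) ^ κ * (1 / a) ^ (1 - κ)) := by
    rw [hGval]
    calc (S.card : ℝ) * ∫ r in Set.Ioc s t, Real.exp (-(t - r) * a)
        ≤ (S.card : ℝ) * ((t - s) ^ κ * (1 / a) ^ (1 - κ)) := by
          apply mul_le_mul_of_nonneg_left hexp_le (Nat.cast_nonneg _)
      _ ≤ (2 : ℝ) ^ ((j : ℝ) + 3) * ((t - s) ^ κ * (1 / a) ^ (1 - κ)) := by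
          apply mul_le_mul_of_nonneg_right hcard (by positivity)
  -- exponent arithmetic
  have hpow : (2 : ℝ) ^ ((j : ℝ) + 3) * (1 / a) ^ (1 - κ)
      ≤ 32 * (2 : ℝ) ^ (-(j : ℝ) * (1 - 3 * κ)) := by
    have h1a : (1 / a : ℝ) = (2 : ℝ) ^ (-(2 * (j : ℝ) - 2)) := by
      rw [ha, one_div, ← Real.rpow_neg (by norm_num : (0:ℝ) ≤ 2)]
    rw [h1a, ← Real.rpow_mul (by norm_num : (0:ℝ) ≤ 2)]
    rw [← Real.rpow_add two_pos]
    have h32 : (32 : ℝ) = (2 : ℝ) ^ (5 : ℝ) := by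
      rw [show (5:ℝ) = ((5:ℕ):ℝ) by norm_num, Real.rpow_natCast]; norm_num
    rw [h32, ← Real.rpow_add two_pos]
    apply Real.rpow_le_rpow_of_exponent_le (by norm_num)
    have hj : (0 : ℝ) ≤ (j : ℝ) := Nat.cast_nonneg j
    push_cast
    nlinarith
  have hfinal : (2 : ℝ) ^ ((j : ℝ) + 3) * ((t - s) ^ κ * (1 / a) ^ (1 - κ))
      ≤ 32 * (t - s) ^ κ * (2 : ℝ) ^ (-(j : ℝ) * (1 - 3 * κ)) := by
    have h := mul_le_mul_of_nonneg_left hpow (Real.rpow_nonneg hτ.le κ)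
    calc (2 : ℝ) ^ ((j : ℝ) + 3) * ((t - s) ^ κ * (1 / a) ^ (1 - κ))
        = (t - s) ^ κ * ((2 : ℝ) ^ ((j : ℝ) + 3) * (1 / a) ^ (1 - κ)) := by ring
      _ ≤ (t - s) ^ κ * (32 * (2 : ℝ) ^ (-(j : ℝ) * (1 - 3 * κ))) := h
      _ = 32 * (t - s) ^ κ * (2 : ℝ) ^ (-(j : ℝ) * (1 - 3 * κ)) := by ring
  calc ∫ r in Set.Ioc s t, F r ≤ ∫ r in Set.Ioc s t, G r := step1
    _ ≤ (2 : ℝ) ^ ((j : ℝ) + 3) * ((t - s) ^ κ * (1 / a) ^ (1 - κ)) := hstep2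
    _ ≤ 32 * (t - s) ^ κ * (2 : ℝ) ^ (-(j : ℝ) * (1 - 3 * κ)) := hfinal
end

section
/- Let κ ∈ (0, 1/3). There exists a finite constant C (depending only on κ) such that for all integers j ≥ 0 and all reals 0 ≤ s < t one has ∫_{-∞}^s Σ_{k ∈ ℤ, 2^{j-1} ≤ |k| ≤ 2^{j+1}} exp(-(s - r)k²) (1 - exp(-(t - s)k²))² dr ≤ C (t - s)^κ 2^{-j(1 - 3κ)}. -/
open MeasureTheory Set Filter

lemma exp_integrableOn_Iic' (s c : ℝ) (hc : 0 < c) :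
    IntegrableOn (fun r => Real.exp (-(s - r) * c)) (Set.Iic s) := by
  have base : IntegrableOn (fun x => Real.exp (-c * x)) (Set.Ioi (0:ℝ)) :=
    exp_neg_integrableOn_Ioi 0 hc
  have emb : MeasurableEmbedding (fun r : ℝ => s - r) := by
    have h : (fun r : ℝ => s - r) = (fun r : ℝ => s + r) ∘ (fun r : ℝ => -r) := by
      ext r; simp [sub_eq_add_neg]
    rw [h]
    exact (MeasurableEquiv.addLeft s).measurableEmbedding.comp
      (Homeomorph.neg ℝ).measurableEmbedding
  have mp : MeasurePreserving (fun r : ℝ => s - r) volume volume := by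
    have h1 : MeasurePreserving (fun r : ℝ => -r) (volume : Measure ℝ) volume :=
      Measure.measurePreserving_neg _
    have h2 : MeasurePreserving (fun r : ℝ => s + r) (volume : Measure ℝ) volume :=
      measurePreserving_add_left volume s
    have := h2.comp h1
    simpa [Function.comp_def, sub_eq_add_neg] using this
  have key := (mp.integrableOn_comp_preimage emb).2 base
  have hpre : (fun r : ℝ => s - r) ⁻¹' (Set.Ioi 0) = Set.Iio s := by
    ext r; simp [sub_pos]
  rw [hpre] at key
  rw [integrableOn_Iic_iff_integrableOn_Iio]
  refine key.congr_fun ?_ measurableSet_Iio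
  intro r _
  simp only [Function.comp]
  ring_nf

lemma exp_integral_Iic' (s c : ℝ) (hc : 0 < c) :
    ∫ r in Set.Iic s, Real.exp (-(s - r) * c) = 1 / c := by
  have hderiv : ∀ x ∈ Set.Iic s, HasDerivAt (fun r => Real.exp (-(s - r) * c) / c)
      (Real.exp (-(s - x) * c)) x := by
    intro x _
    have h : HasDerivAt (fun r : ℝ => -(s - r) * c) c x := by
      simpa using ((hasDerivAt_id x).const_sub s).neg.mul_const c
    have h2 := (h.exp).div_const c
    simpa [mul_div_cancel_right₀ _ hc.ne'] using h2
  have h1 : Tendsto (fun r : ℝ => -(s - r) * c) atBot atBot := by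
    have : Tendsto (fun r : ℝ => r - s) atBot atBot :=
      tendsto_atBot_add_const_right _ (-s) tendsto_id
    simpa [neg_sub] using this.atBot_mul_const hc
  have htend : Tendsto (fun r => Real.exp (-(s - r) * c) / c) atBot (nhds 0) := by
    have := (Real.tendsto_exp_atBot.comp h1).div_const c
    simpa using this
  have := integral_Iic_of_hasDerivAt_of_tendsto' hderiv (exp_integrableOn_Iic' s c hc) htend
  simpa using this

lemma one_sub_exp_le_rpow {κ x : ℝ} (hκ0 : 0 < κ) (hκ1 : κ ≤ 1) (hx : 0 ≤ x) :
    1 - Real.exp (-x) ≤ x ^ κ := by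
  rcases eq_or_lt_of_le hx with h | hx0
  · simp [← h, Real.zero_rpow hκ0.ne']
  rcases le_or_gt 1 x with h1 | h1
  · have : 1 - Real.exp (-x) ≤ 1 := by
      have := Real.exp_pos (-x); linarith
    exact this.trans (Real.one_le_rpow h1 hκ0.le)
  · have h2 : 1 - Real.exp (-x) ≤ x := by
      have := Real.add_one_le_exp (-x); linarith
    calc 1 - Real.exp (-x) ≤ x := h2
      _ = x ^ (1:ℝ) := (Real.rpow_one x).symm
      _ ≤ x ^ κ := Real.rpow_le_rpow_of_exponent_ge hx0 h1.le hκ1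

lemma sq_one_sub_exp_le {x : ℝ} (hx : 0 ≤ x) :
    (1 - Real.exp (-x)) ^ 2 ≤ 1 - Real.exp (-x) := by
  have h1 : Real.exp (-x) ≤ 1 := Real.exp_le_one_iff.mpr (by linarith)
  have h2 := Real.exp_pos (-x)
  nlinarith [sq_nonneg (1 - Real.exp (-x))]

theorem dyadic_heat_bound_second
    (κ : ℝ) (hκ : κ ∈ Set.Ioo (0 : ℝ) (1 / 3)) :
    ∃ C : ℝ, ∀ j : ℕ, ∀ s t : ℝ, 0 ≤ s → s < t →
      (∫ r in Set.Iic s,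
          ∑' k : ℤ, if (2 : ℝ) ^ ((j : ℝ) - 1) ≤ |(k : ℝ)| ∧ |(k : ℝ)| ≤ (2 : ℝ) ^ ((j : ℝ) + 1)
            then Real.exp (-(s - r) * (k : ℝ) ^ 2) *
              (1 - Real.exp (-(t - s) * (k : ℝ) ^ 2)) ^ 2 else 0)
        ≤ C * (t - s) ^ κ * (2 : ℝ) ^ (-(j : ℝ) * (1 - 3 * κ)) := by
  obtain ⟨hκ0, hκ3⟩ := hκ
  refine ⟨32, ?_⟩
  intro j s t hs hst
  have hτ : 0 < t - s := sub_pos.mpr hst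
  set N : ℕ := 2 ^ (j + 1) with hN
  set K : Finset ℤ := Finset.Icc (-(N : ℤ)) (N : ℤ) with hK
  have h2j1 : (2 : ℝ) ^ ((j : ℝ) + 1) = (N : ℝ) := by
    have h : ((j : ℝ) + 1) = ((j + 1 : ℕ) : ℝ) := by push_cast; ring
    rw [h, Real.rpow_natCast, hN]; push_cast; ring
  set a : ℝ := (2 : ℝ) ^ ((j : ℝ) - 1) with ha'
  have ha : 0 < a := Real.rpow_pos_of_pos two_pos _
  set B : ℝ := (t - s) ^ κ * a ^ (2 * κ - 2) with hB'
  have hBnn : 0 ≤ B := by positivity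
  -- reduce tsum to finite sum
  have hsum : ∀ r : ℝ,
      (∑' k : ℤ, if a ≤ |(k : ℝ)| ∧ |(k : ℝ)| ≤ (2 : ℝ) ^ ((j : ℝ) + 1)
          then Real.exp (-(s - r) * (k : ℝ) ^ 2) *
            (1 - Real.exp (-(t - s) * (k : ℝ) ^ 2)) ^ 2 else 0)
      = ∑ k ∈ K, (if a ≤ |(k : ℝ)| ∧ |(k : ℝ)| ≤ (2 : ℝ) ^ ((j : ℝ) + 1)
          then Real.exp (-(s - r) * (k : ℝ) ^ 2) *
            (1 - Real.exp (-(t - s) * (k : ℝ) ^ 2)) ^ 2 else 0) := by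
    intro r
    refine tsum_eq_sum ?_
    intro k hk
    rw [if_neg]
    rintro ⟨-, h2⟩
    apply hk
    rw [h2j1] at h2
    have h2' : |k| ≤ (N : ℤ) := by
      exact_mod_cast h2
    rw [hK, Finset.mem_Icc]
    exact ⟨neg_le_of_abs_le h2', le_of_abs_le h2'⟩
  simp_rw [hsum]
  -- integrability of each summand
  have hint : ∀ k ∈ K, IntegrableOn (fun r =>
      if a ≤ |(k : ℝ)| ∧ |(k : ℝ)| ≤ (2 : ℝ) ^ ((j : ℝ) + 1)
        then Real.exp (-(s - r) * (k : ℝ) ^ 2) *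
          (1 - Real.exp (-(t - s) * (k : ℝ) ^ 2)) ^ 2 else 0) (Set.Iic s) := by
    intro k _
    by_cases h : a ≤ |(k : ℝ)| ∧ |(k : ℝ)| ≤ (2 : ℝ) ^ ((j : ℝ) + 1)
    · simp only [if_pos h]
      have hk0 : (k : ℝ) ≠ 0 := by
        intro h0
        rw [h0] at h
        simpa [ha.not_ge] using h.1
      have hc : 0 < ((k : ℝ) ^ 2) := by positivity
      exact (exp_integrableOn_Iic' s _ hc).mul_const _
    · simp only [if_neg h]
      exact integrableOn_zero
  rw [integral_finset_sum K hint]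
  -- per-term bound
  have hterm : ∀ k ∈ K, (∫ r in Set.Iic s,
      if a ≤ |(k : ℝ)| ∧ |(k : ℝ)| ≤ (2 : ℝ) ^ ((j : ℝ) + 1)
        then Real.exp (-(s - r) * (k : ℝ) ^ 2) *
          (1 - Real.exp (-(t - s) * (k : ℝ) ^ 2)) ^ 2 else 0) ≤ B := by
    intro k _
    by_cases h : a ≤ |(k : ℝ)| ∧ |(k : ℝ)| ≤ (2 : ℝ) ^ ((j : ℝ) + 1)
    · simp only [if_pos h]
      obtain ⟨h1, -⟩ := h
      have hk0 : (k : ℝ) ≠ 0 := by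
        intro h0
        rw [h0] at h1
        simpa [ha.not_ge] using h1
      have hc : 0 < ((k : ℝ) ^ 2) := by positivity
      rw [integral_mul_const, exp_integral_Iic' s _ hc]
      have hA : (1 - Real.exp (-(t - s) * (k : ℝ) ^ 2)) ^ 2 ≤ ((t - s) * (k : ℝ) ^ 2) ^ κ := by
        have hx : 0 ≤ (t - s) * (k : ℝ) ^ 2 := by positivity
        have hrw : -(t - s) * (k : ℝ) ^ 2 = -((t - s) * (k : ℝ) ^ 2) := by ring
        rw [hrw]
        exact (sq_one_sub_exp_le hx).trans
          (one_sub_exp_le_rpow hκ0 (by linarith) hx)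
      calc 1 / ((k : ℝ) ^ 2) * (1 - Real.exp (-(t - s) * (k : ℝ) ^ 2)) ^ 2
          ≤ 1 / ((k : ℝ) ^ 2) * (((t - s) * (k : ℝ) ^ 2) ^ κ) := by
            apply mul_le_mul_of_nonneg_left hA
            positivity
        _ = (t - s) ^ κ * (((k : ℝ) ^ 2) ^ (κ - 1)) := by
            rw [Real.mul_rpow hτ.le hc.le, Real.rpow_sub hc, Real.rpow_one]
            ring
        _ ≤ B := by
            rw [hB']
            apply mul_le_mul_of_nonneg_left _ (by positivity)
            have hsq : ((k : ℝ) ^ 2) ^ (κ - 1) = |(k : ℝ)| ^ (2 * (κ - 1)) := by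
              rw [← sq_abs, ← Real.rpow_natCast |(k : ℝ)| 2, ← Real.rpow_mul (abs_nonneg _)]
              norm_num
            rw [hsq]
            have := Real.rpow_le_rpow_of_nonpos ha h1 (by linarith : 2 * (κ - 1) ≤ 0)
            calc |(k : ℝ)| ^ (2 * (κ - 1)) ≤ a ^ (2 * (κ - 1)) := this
              _ = a ^ (2 * κ - 2) := by ring_nf
    · simp only [if_neg h, integral_zero]
      exact hBnn
  calc (∑ k ∈ K, ∫ r in Set.Iic s,
        if a ≤ |(k : ℝ)| ∧ |(k : ℝ)| ≤ (2 : ℝ) ^ ((j : ℝ) + 1)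
          then Real.exp (-(s - r) * (k : ℝ) ^ 2) *
            (1 - Real.exp (-(t - s) * (k : ℝ) ^ 2)) ^ 2 else 0)
      ≤ K.card • B := Finset.sum_le_card_nsmul K _ B hterm
    _ = (K.card : ℝ) * B := nsmul_eq_mul _ _
    _ ≤ (2 : ℝ) ^ ((j : ℝ) + 3) * B := by
        apply mul_le_mul_of_nonneg_right _ hBnn
        have hcard : K.card = 2 * N + 1 := by
          rw [hK, Int.card_Icc]
          omega
        have hnat : 2 * N + 1 ≤ 2 ^ (j + 3) := by
          have h1 : 1 ≤ 2 ^ (j + 1) := Nat.one_le_two_pow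
          have h2 : 2 ^ (j + 3) = 4 * 2 ^ (j + 1) := by ring
          rw [hN]
          omega
        have h3 : ((j : ℝ) + 3) = ((j + 3 : ℕ) : ℝ) := by push_cast; ring
        rw [hcard, h3, Real.rpow_natCast]
        exact_mod_cast hnat
    _ ≤ 32 * (t - s) ^ κ * (2 : ℝ) ^ (-(j : ℝ) * (1 - 3 * κ)) := by
        rw [hB', ha', ← Real.rpow_mul (by norm_num : (0:ℝ) ≤ 2),
          ← mul_assoc]
        rw [mul_comm ((2:ℝ) ^ ((j:ℝ)+3)) ((t-s) ^ κ), mul_assoc,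
          ← Real.rpow_add two_pos]
        have h32 : (32 : ℝ) = (2 : ℝ) ^ (5 : ℝ) := by
          rw [show (5:ℝ) = ((5:ℕ):ℝ) by norm_num, Real.rpow_natCast]; norm_num
        rw [mul_comm (32 : ℝ) ((t - s) ^ κ), mul_assoc, h32, ← Real.rpow_add two_pos]
        apply mul_le_mul_of_nonneg_left _ (by positivity)
        apply Real.rpow_le_rpow_of_exponent_le one_le_two
        have hj0 : (0 : ℝ) ≤ (j : ℝ) := Nat.cast_nonneg j
        nlinarith [mul_nonneg hj0 hκ0.le]
end
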